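/- arXiv:1601.07164 — 4 statements merged into one kernel-verified Lean document; each statement's English description precedes it below -/
import Mathlib

section
/- For the rumor process on K_n, A_n(k+1) ≤ M_n(k) for 1 ≤ k ≤ n-1, and M_n(k) ≤ A_n(k+2) for 1 ≤ k ≤ n-2. -/
open scoped ENNReal Classical

/-- One step of the rumor process: the two endpoints of the chosen edge `e`
share all their informations. -/
noncomputable def updateInfo {V I : Type*} (f : V → Set I) (e : Sym2 V) : V → Set I :=
  fun v => if v ∈ e then ⋃ w ∈ {w | w ∈ e}, f w else f v

/-- Probability of a property under the uniform distribution on a finite type. -/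
noncomputable def unifProb {α : Type*} [Fintype α] (p : α → Prop) : ℝ≥0∞ :=
  ((Finset.univ.filter p).card : ℝ≥0∞) / (Fintype.card α : ℝ≥0∞)

/-- Expectation of a nonnegative function under the uniform distribution on a finite type. -/
noncomputable def unifExp {α : Type*} [Fintype α] (g : α → ℝ≥0∞) : ℝ≥0∞ :=
  (∑ a : α, g a) / (Fintype.card α : ℝ≥0∞)

/-- Probability that, after `t` i.i.d. uniform edge choices from the graph `G`,
the information configuration started from `f` satisfies `p`. -/
noncomputable def stepProb {n : ℕ} (G : SimpleGraph (Fin n)) {I : Type*}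
    (f : Fin n → Set I) (p : (Fin n → Set I) → Prop) (t : ℕ) : ℝ≥0∞ :=
  letI : Fintype G.edgeSet := (Set.toFinite _).fintype
  unifProb (fun σ : Fin t → G.edgeSet =>
    p (((List.ofFn fun i => ((σ i : Sym2 (Fin n)))).foldl updateInfo f)))

/-- Expected hitting time of the (monotone) property `p` for the rumor process on `G`
started from configuration `f`: `E[τ] = ∑_{t ≥ 0} P(τ > t)`. -/
noncomputable def expTime {n : ℕ} (G : SimpleGraph (Fin n)) {I : Type*}
    (f : Fin n → Set I) (p : (Fin n → Set I) → Prop) : ℝ≥0∞ :=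
  ∑' t : ℕ, stepProb G f (fun c => ¬ p c) t

/-- Initial scenario where each of the `n` sites knows a distinct information. -/
def initDistinct (n : ℕ) : Fin n → Set ℕ := fun v => {(v : ℕ)}

/-- Initial scenario with `n-1` informations: information `0` is known by sites `0` and `1`,
and information `v-1` is known by site `v` for `v ≥ 2`. -/
def initDoubled (n : ℕ) : Fin n → Set ℕ := fun v => {((v : ℕ) - 1)}

/-- `Mq n k`: expected time until informations `0,…,k-1` are known by all sites of `K_n`,
starting from the all-distinct configuration. -/
noncomputable def Mq (n k : ℕ) : ℝ≥0∞ :=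
  expTime ⊤ (initDistinct n) (fun f => ∀ v : Fin n, ∀ j < k, j ∈ f v)

/-- `Aq n k`: expected time until the first `k-1` informations are known by all sites of `K_n`,
starting from the configuration with information `0` doubled. -/
noncomputable def Aq (n k : ℕ) : ℝ≥0∞ :=
  expTime ⊤ (initDoubled n) (fun f => ∀ v : Fin n, ∀ j < k - 1, j ∈ f v)

/-- The `m`-th harmonic number. -/
noncomputable def H (m : ℕ) : ℝ := ∑ j ∈ Finset.range m, (1 : ℝ) / (j + 1)

/-! Both inequalities are couplings by relabelling. An automorphism `φ` of the graph maps a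
uniform edge sequence to a uniform edge sequence, and the process started with site `v` holding
the single information `ℓ v` is the image under `ℓ` of the process that tracks site identities.
Rotating `K_n` by `-1`, the doubled scenario becomes the all-distinct one with information `n - 1`
renamed `0`, so it completes informations `0, …, k - 1` no later. Rotating by `2`, information `j`
of the all-distinct scenario becomes information `j + 1` of the doubled one for `j ≤ n - 3`, while
the doubled information `0` merges the distinct informations `n - 2` and `n - 1`; so once
`0, …, k` are known everywhere in the doubled scenario, `0, …, k - 1` are known everywhere in the
all-distinct one. -/

open Function

section updateInfo

variable {V W I J : Type*}

theorem updateInfo_map_comp {π : V → W} (hπ : Injective π) (f : W → Set I) (e : Sym2 V) :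
    updateInfo f (e.map π) ∘ π = updateInfo (f ∘ π) e := by
  funext v
  have hmem : π v ∈ e.map π ↔ v ∈ e := by
    rw [← SetLike.mem_coe, Sym2.coe_map, hπ.mem_set_image, SetLike.mem_coe]
  simp only [updateInfo, comp_apply, hmem]
  split_ifs
  · change ⋃ w ∈ (e.map π : Set W), f w = ⋃ w ∈ (e : Set V), f (π w)
    rw [Sym2.coe_map, Set.biUnion_image]
  · rfl

theorem foldl_updateInfo_map_comp {π : V → W} (hπ : Injective π) (f : W → Set I)
    (es : List (Sym2 V)) :
    (es.map (Sym2.map π)).foldl updateInfo f ∘ π = es.foldl updateInfo (f ∘ π) := by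
  induction es generalizing f with
  | nil => rfl
  | cons e es ih => simp only [List.map_cons, List.foldl_cons, ih, updateInfo_map_comp hπ]

theorem updateInfo_image (m : I → J) (f : V → Set I) (e : Sym2 V) :
    updateInfo (Set.image m ∘ f) e = Set.image m ∘ updateInfo f e := by
  funext v
  simp only [updateInfo, comp_apply]
  split_ifs
  · rw [Set.image_iUnion₂]
  · rfl

theorem foldl_updateInfo_image (m : I → J) (f : V → Set I) (es : List (Sym2 V)) :
    es.foldl updateInfo (Set.image m ∘ f) = Set.image m ∘ es.foldl updateInfo f := by
  induction es generalizing f with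
  | nil => rfl
  | cons e es ih => simp only [List.foldl_cons, updateInfo_image, ih]

theorem foldl_updateInfo_singleton (ℓ : V → I) (es : List (Sym2 V)) :
    es.foldl updateInfo (fun v => {ℓ v}) = Set.image ℓ ∘ es.foldl updateInfo (fun v => {v}) := by
  rw [← foldl_updateInfo_image]
  simp only [comp_def, Set.image_singleton]

end updateInfo

section coupling

variable {n : ℕ} {G : SimpleGraph (Fin n)} {I J : Type*}

theorem stepProb_not_le_of_aut (φ : G ≃g G) {f : Fin n → Set I} {g : Fin n → Set J}
    {p : (Fin n → Set I) → Prop} {q : (Fin n → Set J) → Prop}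
    (h : ∀ es : List (Sym2 (Fin n)),
      q ((es.map (Sym2.map φ)).foldl updateInfo g) → p (es.foldl updateInfo f))
    (t : ℕ) : stepProb G f (fun c => ¬ p c) t ≤ stepProb G g (fun c => ¬ q c) t := by
  unfold stepProb unifProb
  refine ENNReal.div_le_div_right (Nat.cast_le.mpr ?_) _
  refine Finset.card_le_card_of_injOn (fun σ : Fin t → G.edgeSet => φ.mapEdgeSet ∘ σ) ?_ ?_
  · intro σ hσ
    simp only [Finset.coe_filter, Finset.mem_univ, true_and, Set.mem_ofPred_eq] at hσ ⊢
    refine fun hq => hσ (h _ ?_)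
    rwa [List.map_ofFn]
  · intro σ _ τ _ hστ
    exact funext fun i => φ.mapEdgeSet.injective (congrFun hστ i)

theorem expTime_le_of_aut (φ : G ≃g G) {f : Fin n → Set I} {g : Fin n → Set J}
    {p : (Fin n → Set I) → Prop} {q : (Fin n → Set J) → Prop}
    (h : ∀ es : List (Sym2 (Fin n)),
      q ((es.map (Sym2.map φ)).foldl updateInfo g) → p (es.foldl updateInfo f)) :
    expTime G f p ≤ expTime G g q :=
  ENNReal.tsum_le_tsum (stepProb_not_le_of_aut φ h)

theorem expTime_le_of_relabel (φ : G ≃g G) (ℓ : Fin n → I) (ℓ' : Fin n → J) {S : Set I}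
    {T : Set J} (h : ∀ j ∈ S, ∃ j' ∈ T, ∀ w, ℓ' (φ w) = j' → ℓ w = j) :
    expTime G (fun v => {ℓ v}) (fun c => ∀ v, ∀ j ∈ S, j ∈ c v) ≤
      expTime G (fun v => {ℓ' v}) (fun c => ∀ v, ∀ j ∈ T, j ∈ c v) := by
  refine expTime_le_of_aut φ fun es hT v j hj => ?_
  obtain ⟨j', hj', hℓ⟩ := h j hj
  have hφv : j' ∈ ((es.map (Sym2.map φ)).foldl updateInfo (fun v => {ℓ' v}) ∘ φ) v :=
    hT (φ v) j' hj'
  rw [foldl_updateInfo_map_comp φ.injective] at hφv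
  change j' ∈ es.foldl updateInfo (fun v => {(ℓ' ∘ φ) v}) v at hφv
  rw [foldl_updateInfo_singleton] at hφv
  obtain ⟨w, hw, hℓw⟩ := hφv
  rw [foldl_updateInfo_singleton]
  exact ⟨w, hw, hℓ w hℓw⟩

end coupling

section interlacing

variable {n k : ℕ}

open SimpleGraph

theorem Aq_succ_le_Mq (hk : k < n) : Aq n (k + 1) ≤ Mq n k := by
  have : NeZero n := ⟨by omega⟩
  refine expTime_le_of_relabel (.completeGraph (Equiv.addRight ⟨n - 1, by omega⟩))
    (fun v => (v : ℕ) - 1) Fin.val (S := Set.Iio k) (T := Set.Iio k)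
    fun j hj => ⟨j, hj, fun w hw => ?_⟩
  dsimp [Iso.completeGraph] at hw
  simp only [Set.mem_Iio] at hj
  simp only [Fin.val_add_eq_ite] at hw
  split_ifs at hw <;> omega

theorem Mq_le_Aq_add_two (hk : k + 2 ≤ n) : Mq n k ≤ Aq n (k + 2) := by
  have : NeZero n := ⟨by omega⟩
  refine expTime_le_of_relabel (.completeGraph (Equiv.addRight 2))
    Fin.val (fun v => (v : ℕ) - 1) (S := Set.Iio k) (T := Set.Iio (k + 1))
    fun j hj => ⟨j + 1, by simpa using hj, fun w hw => ?_⟩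
  dsimp [Iso.completeGraph] at hw
  simp only [Set.mem_Iio] at hj
  rw [Fin.val_add_eq_ite, Fin.coe_ofNat_eq_mod, Nat.mod_eq_of_lt (by omega : 2 < n)] at hw
  split_ifs at hw <;> omega

end interlacing

theorem interlacing_A_M (n k : ℕ) :
    (1 ≤ k → k ≤ n - 1 → Aq n (k + 1) ≤ Mq n k) ∧
    (1 ≤ k → k ≤ n - 2 → Mq n k ≤ Aq n (k + 2)) :=
  ⟨fun _ hk => Aq_succ_le_Mq (by omega), fun _ hk => Mq_le_Aq_add_two (by omega)⟩
end

section
/- In the rumor process on any finite connected graph G = (V,E) starting with each site knowing a distinct information, the time Y_k until site x_k knows all |V| informations has the same distribution as the time τ_k until information k (initially known only by x_k) is known by all sites. -/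
/-!
Start every site with its own name as its only information. Then site `b` knows the name of
site `a` after the edge sequence `e₁, …, e_t` exactly when there is a path of transmissions
`a = u₀, u₁, …, u_t = b` in which `u_{i-1}` and `u_i` either coincide or are the endpoints of
`eᵢ`. This condition is symmetric under reversing both the path and the edge sequence, so `x`
knows everything after `σ` iff everyone knows `x`'s name after the reversal of `σ`. Reversal
is a bijection of `Fin t → E(G)`, hence the two events have the same number of elements.
-/

open scoped ENNReal Classical

theorem List.ofFn_comp_rev {α : Type*} {t : ℕ} (σ : Fin t → α) :
    List.ofFn (fun i => σ i.rev) = (List.ofFn σ).reverse := by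
  refine List.ext_getElem (by simp) fun i h₁ h₂ => ?_
  simp only [List.getElem_ofFn, List.getElem_reverse, List.length_ofFn]
  congr 1
  ext
  simp only [Fin.val_rev]
  omega

namespace RumorProcess

variable {V I : Type*}

def Transmits (e : Sym2 V) (a b : V) : Prop := (a ∈ e ∧ b ∈ e) ∨ a = b

theorem transmits_comm {e : Sym2 V} {a b : V} : Transmits e a b ↔ Transmits e b a := by
  unfold Transmits
  constructor <;> rintro (⟨ha, hb⟩ | rfl) <;> tauto

def Propagates : List (Sym2 V) → V → V → Prop
  | [], a, b => a = b
  | e :: l, a, b => ∃ u, Transmits e a u ∧ Propagates l u b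

theorem propagates_append_singleton (l : List (Sym2 V)) (e : Sym2 V) (a b : V) :
    Propagates (l ++ [e]) a b ↔ ∃ u, Propagates l a u ∧ Transmits e u b := by
  induction l generalizing a with
  | nil => simp [Propagates]
  | cons e' l ih =>
    simp only [List.cons_append, Propagates, ih]
    constructor
    · rintro ⟨u, hau, w, huw, hwb⟩; exact ⟨w, ⟨u, hau, huw⟩, hwb⟩
    · rintro ⟨w, ⟨u, hau, huw⟩, hwb⟩; exact ⟨u, hau, w, huw, hwb⟩

theorem propagates_reverse (l : List (Sym2 V)) (a b : V) :
    Propagates l.reverse b a ↔ Propagates l a b := by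
  induction l generalizing a b with
  | nil => exact eq_comm
  | cons e l ih =>
    simp only [Propagates, List.reverse_cons, propagates_append_singleton, ih]
    constructor
    · rintro ⟨u, hub, hua⟩; exact ⟨u, transmits_comm.1 hua, hub⟩
    · rintro ⟨u, hau, hub⟩; exact ⟨u, hub, transmits_comm.1 hau⟩

theorem mem_updateInfo {f : V → Set I} {e : Sym2 V} {i : I} {w : V} :
    i ∈ updateInfo f e w ↔ ∃ u, i ∈ f u ∧ Transmits e u w := by
  by_cases hw : w ∈ e
  · simp only [updateInfo, if_pos hw, Set.mem_iUnion, Set.mem_ofPred_eq, Transmits]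
    constructor
    · rintro ⟨u, hu, hi⟩; exact ⟨u, hi, Or.inl ⟨hu, hw⟩⟩
    · rintro ⟨u, hi, ⟨hu, -⟩ | rfl⟩ <;> exact ⟨_, ‹_›, hi⟩
  · simp only [updateInfo, if_neg hw, Transmits]
    constructor
    · exact fun hi => ⟨w, hi, Or.inr rfl⟩
    · rintro ⟨u, hi, ⟨-, hw'⟩ | rfl⟩
      exacts [absurd hw' hw, hi]

theorem mem_foldl_updateInfo (l : List (Sym2 V)) (f : V → Set I) (i : I) (b : V) :
    i ∈ l.foldl updateInfo f b ↔ ∃ a, i ∈ f a ∧ Propagates l a b := by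
  induction l generalizing f with
  | nil => simp [Propagates]
  | cons e l ih =>
    simp only [List.foldl_cons, ih, mem_updateInfo, Propagates]
    constructor
    · rintro ⟨w, ⟨u, hi, huw⟩, hwb⟩; exact ⟨u, hi, w, huw, hwb⟩
    · rintro ⟨u, hi, w, huw, hwb⟩; exact ⟨w, ⟨u, hi, huw⟩, hwb⟩

theorem mem_foldl_updateInfo_singleton (l : List (Sym2 V)) (a b : V) :
    a ∈ l.foldl updateInfo (fun v => ({v} : Set V)) b ↔ Propagates l a b := by
  simp [mem_foldl_updateInfo]

end RumorProcess

open RumorProcess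

theorem time_reversal_distribution_equality_general (n : ℕ) (G : SimpleGraph (Fin n))
    (x : Fin n) :
    ∀ t : ℕ,
      stepProb G (fun v => ({v} : Set (Fin n))) (fun f => f x = Set.univ) t
        = stepProb G (fun v => ({v} : Set (Fin n))) (fun f => ∀ v : Fin n, x ∈ f v) t := by
  intro t
  unfold stepProb unifProb
  congr 2
  refine Finset.card_bijective (· ∘ Fin.rev)
    (Function.Involutive.bijective fun σ => by simp [Function.comp_def]) fun σ => ?_
  simp only [Finset.mem_filter, Finset.mem_univ, true_and, Set.eq_univ_iff_forall,
    Function.comp_apply, List.ofFn_comp_rev fun i => (σ i : Sym2 (Fin n)),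
    mem_foldl_updateInfo_singleton, propagates_reverse]

theorem time_reversal_distribution_equality (n : ℕ) (G : SimpleGraph (Fin n))
    (hG : G.Connected) (x : Fin n) :
    ∀ t : ℕ,
      stepProb G (fun v => ({v} : Set (Fin n))) (fun f => f x = Set.univ) t
        = stepProb G (fun v => ({v} : Set (Fin n))) (fun f => ∀ v : Fin n, x ∈ f v) t :=
  time_reversal_distribution_equality_general n G x
end

section
/- For the rumor process on K_n, conditioned on site x being the k-th site (in the ordering by time of learning all informations, ties broken uniformly) to know all informations, the expected remaining time until all sites know all informations satisfies E[S_x | σ(x)=k] ≤ ((n-1)/2)·(H(n-1) − H(k-1) + H(n-k)). -/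
open scoped ENNReal Classical

/-- Configuration after the first `s` steps of the edge list `l`, on `K_n`,
starting from each site knowing its own (distinct) information. -/
noncomputable def confAt {n : ℕ} (l : List (Sym2 (Fin n))) (s : ℕ) : Fin n → Set (Fin n) :=
  (l.take s).foldl updateInfo (fun v => {v})

/-- Site `x` knows all informations at time `s`. -/
def knowsAllAt {n : ℕ} (l : List (Sym2 (Fin n))) (s : ℕ) (x : Fin n) : Prop :=
  confAt l s x = Set.univ

/-- `Y_x`: first time site `x` knows all informations. -/
noncomputable def Yt {n : ℕ} (l : List (Sym2 (Fin n))) (x : Fin n) : ℕ :=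
  sInf {s : ℕ | knowsAllAt l s x}

/-- `N(t)`: number of sites knowing all informations at time `t`. -/
noncomputable def Nt {n : ℕ} (l : List (Sym2 (Fin n))) (s : ℕ) : ℕ :=
  (Finset.univ.filter fun v => knowsAllAt l s v).card

/-- The tie-breaking correction `L_x`, using the fair coins `c`. -/
noncomputable def Lt {n : ℕ} (l : List (Sym2 (Fin n))) (c : Fin n → Bool) (x : Fin n) : ℕ :=
  if Nt l (Yt l x) - Nt l (Yt l x - 1) = 2 then
    if hne : (Finset.univ.filter fun y => Yt l y = Yt l x).Nonempty then
      let α := (Finset.univ.filter fun y => Yt l y = Yt l x).min' hne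
      if x = α then (if c α then 1 else 0) else (if c α then 0 else 1)
    else 0
  else 0

/-- `σ(x) = N(Y_x) - L_x`: the rank of site `x` in the order of learning all informations. -/
noncomputable def rnk {n : ℕ} (l : List (Sym2 (Fin n))) (c : Fin n → Bool) (x : Fin n) : ℕ :=
  Nt l (Yt l x) - Lt l c x

/-- Probability, at horizon `t` (with `t` i.i.d. uniform edge choices and independent fair
coins), that site `x` has learnt all informations by time `t` and has rank `k`. -/
noncomputable def rankProb (n k : ℕ) (x : Fin n) (t : ℕ) : ℝ≥0∞ :=
  letI : Fintype (⊤ : SimpleGraph (Fin n)).edgeSet := (Set.toFinite _).fintype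
  unifProb (fun ω : (Fin t → (⊤ : SimpleGraph (Fin n)).edgeSet) × (Fin n → Bool) =>
    knowsAllAt (List.ofFn fun i => ((ω.1 i : Sym2 (Fin n)))) t x ∧
      rnk (List.ofFn fun i => ((ω.1 i : Sym2 (Fin n)))) ω.2 x = k)

/-- `τ_V`: first time all sites know all informations. -/
noncomputable def tauAll {n : ℕ} (l : List (Sym2 (Fin n))) : ℕ :=
  sInf {s : ℕ | ∀ v : Fin n, knowsAllAt l s v}

/-- Horizon-`t` expectation of `S_x · 1{σ(x) = k}`, where `S_x = τ_V - Y_x` is the remaining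
time after site `x` knows all informations (truncated at the horizon `t`). -/
noncomputable def rankRemExp (n k : ℕ) (x : Fin n) (t : ℕ) : ℝ≥0∞ :=
  letI : Fintype (⊤ : SimpleGraph (Fin n)).edgeSet := (Set.toFinite _).fintype
  unifExp (fun ω : (Fin t → (⊤ : SimpleGraph (Fin n)).edgeSet) × (Fin n → Bool) =>
    let l := List.ofFn fun i => ((ω.1 i : Sym2 (Fin n)))
    if knowsAllAt l t x ∧ rnk l ω.2 x = k then
      (((if ∀ v : Fin n, knowsAllAt l t v then tauAll l else t) - Yt l x : ℕ) : ℝ≥0∞)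
    else 0)

/-!
After `x` learns everything (at time `Y_x`, with rank `k`), at least `k` sites are fully informed,
so the remaining time splits into the times spent at the levels `j = k, …, n - 1` of the number of
fully informed sites. At level `j` every edge of `K_n` joining one of the `j` informed sites to
one of the `n - j` others raises the level, so each step leaves level `j` with probability at
least `j (n - j) / C(n, 2)`. The event `σ(x) = k` and the level at time `s ≥ Y_x` are determined
by the first `s` steps, which the `s`-th edge is independent of; hence the expected time spent at
level `j` on `{σ(x) = k}` is at most `C(n, 2) / (j (n - j)) · P(σ(x) = k)`. Summing over `j` and
splitting `C(n, 2) / (j (n - j)) = (n - 1) / 2 · (1 / j + 1 / (n - j))` gives the harmonic sums.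
-/

open Finset Function

section Resampling

variable {ι E β : Type*} [Fintype ι] [DecidableEq ι] [Fintype E] [Fintype β]

theorem sum_card_filter_update (i : ι) (P : (ι → E) × β → Prop) [DecidablePred P] :
    ∑ ω : (ι → E) × β, #{e : E | P (update ω.1 i e, ω.2)} =
      Fintype.card E * #{ω : (ι → E) × β | P ω} := by
  let swap : Equiv.Perm (((ι → E) × β) × E) :=
    Involutive.toPerm (fun p => ((update p.1.1 i p.2, p.1.2), p.1.1 i)) fun p => by simp
  calc ∑ ω : (ι → E) × β, #{e : E | P (update ω.1 i e, ω.2)}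
      = ∑ p : ((ι → E) × β) × E, if P (swap p).1 then 1 else 0 := by
        simp only [Fintype.sum_prod_type, card_filter]; rfl
    _ = ∑ p : ((ι → E) × β) × E, if P p.1 then 1 else 0 :=
        Equiv.sum_comp swap fun p => if P p.1 then 1 else 0
    _ = Fintype.card E * #{ω : (ι → E) × β | P ω} := by
        rw [Fintype.sum_prod_type, card_filter, mul_sum]
        refine sum_congr rfl fun ω _ => ?_
        split_ifs <;> simp

theorem mul_card_le_card_mul_card_filter_and (i : ι) {P Q : (ι → E) × β → Prop}
    [DecidablePred P] [DecidablePred Q] {m : ℕ}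
    (hP : ∀ ω, P ω → ∀ e, P (update ω.1 i e, ω.2))
    (hQ : ∀ ω, P ω → m ≤ #{e : E | Q (update ω.1 i e, ω.2)}) :
    m * #{ω | P ω} ≤ Fintype.card E * #{ω | P ω ∧ Q ω} := by
  rw [← sum_card_filter_update i fun ω => P ω ∧ Q ω, card_filter, mul_sum]
  refine sum_le_sum fun ω _ => ?_
  split_ifs with hω
  · calc m * 1 ≤ #{e : E | Q (update ω.1 i e, ω.2)} := by simpa using hQ ω hω
      _ = #{e : E | P (update ω.1 i e, ω.2) ∧ Q (update ω.1 i e, ω.2)} := by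
        congr 1; exact filter_congr fun e _ => by simp [hP ω hω e]
  · simp

/-- Geometric sojourn bound in counting form: if along each trajectory `{s | C s ω}` is an
interval, `C s` does not see the `s`-th edge, and from `C s` at least `m` of the `|E|` choices
of that edge leave `C`, then the expected time spent in `C` is at most `|E| / m` times the
probability of visiting it. -/
theorem mul_sum_card_filter_le_of_exit {t m : ℕ} (C : ℕ → (Fin t → E) × β → Prop)
    (hinterval : ∀ ω {s u v}, s ≤ u → u ≤ v → C s ω → C v ω → C u ω)
    (hstay : ∀ (i : Fin t) ω, C i ω → ∀ e, C i (update ω.1 i e, ω.2))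
    (hexit : ∀ (i : Fin t) ω, C i ω → m ≤ #{e : E | ¬ C (i + 1) (update ω.1 i e, ω.2)}) :
    m * ∑ s ∈ range t, #{ω | C s ω} ≤ Fintype.card E * #{ω | ∃ s, C s ω} := by
  -- a trajectory leaves the interval `{s | C s ω}` at most once
  have hdisj : (range t : Set ℕ).PairwiseDisjoint
      fun s => ({ω | C s ω ∧ ¬ C (s + 1) ω} : Finset _) := by
    intro s _ u _ hsu
    refine disjoint_filter.2 fun ω _ hs hu => ?_
    rcases Nat.lt_or_gt_of_ne hsu with h | h
    · exact hs.2 (hinterval ω (Nat.le_succ s) h hs.1 hu.1)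
    · exact hu.2 (hinterval ω (Nat.le_succ u) h hu.1 hs.1)
  calc m * ∑ s ∈ range t, #{ω | C s ω}
      = ∑ s ∈ range t, m * #{ω | C s ω} := mul_sum _ _ _
    _ ≤ ∑ s ∈ range t, Fintype.card E * #{ω | C s ω ∧ ¬ C (s + 1) ω} := by
        refine sum_le_sum fun s hs => ?_
        let i : Fin t := ⟨s, mem_range.1 hs⟩
        exact mul_card_le_card_mul_card_filter_and i (hstay i) (hexit i)
    _ = Fintype.card E *
          #((range t).biUnion fun s => ({ω | C s ω ∧ ¬ C (s + 1) ω} : Finset _)) := by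
        rw [card_biUnion hdisj, mul_sum]
    _ ≤ Fintype.card E * #{ω | ∃ s, C s ω} := by
        gcongr
        intro ω
        simp only [mem_biUnion, mem_filter, mem_univ, true_and]
        exact fun ⟨s, _, hs, _⟩ => ⟨s, hs⟩

end Resampling

section RumorProcess

variable {n : ℕ} {l l' : List (Sym2 (Fin n))} {s u : ℕ} {x y : Fin n}

theorem apply_subset_foldl_updateInfo {V I : Type*} (l : List (Sym2 V)) (f : V → Set I) (v : V) :
    f v ⊆ l.foldl updateInfo f v := by
  induction l generalizing f with
  | nil => exact subset_rfl
  | cons e l ih =>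
    refine subset_trans ?_ (ih (updateInfo f e))
    by_cases hv : v ∈ e
    · simpa [updateInfo, hv] using Set.subset_biUnion_of_mem (u := f) hv
    · simp [updateInfo, hv]

theorem confAt_mono (l : List (Sym2 (Fin n))) (h : s ≤ u) (v : Fin n) :
    confAt l s v ⊆ confAt l u v := by
  have hprefix : (l.take u).take s = l.take s := by rw [List.take_take, min_eq_left h]
  rw [confAt, confAt, ← List.take_append_drop s (l.take u), hprefix, List.foldl_append]
  exact apply_subset_foldl_updateInfo _ _ v

theorem knowsAllAt.mono (hx : knowsAllAt l s x) (h : s ≤ u) : knowsAllAt l u x :=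
  Set.eq_univ_of_univ_subset (hx ▸ confAt_mono l h x)

theorem knowsAllAt_Yt (hx : knowsAllAt l s x) : knowsAllAt l (Yt l x) x :=
  Nat.sInf_mem (s := {s | knowsAllAt l s x}) ⟨s, hx⟩

theorem Yt_le (hx : knowsAllAt l s x) : Yt l x ≤ s :=
  Nat.sInf_le hx

theorem Nt_mono (l : List (Sym2 (Fin n))) : Monotone (Nt l) :=
  fun _ _ h => card_le_card fun v hv => by
    simp only [mem_filter, mem_univ, true_and] at hv ⊢
    exact hv.mono h

theorem Nt_lt_of_not_forall_knowsAllAt (h : ¬ ∀ v, knowsAllAt l s v) : Nt l s < n := by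
  push Not at h
  obtain ⟨v, hv⟩ := h
  unfold Nt
  simpa using card_lt_card (filter_ssubset.2 ⟨v, mem_univ v, hv⟩)

theorem confAt_eq_of_take_eq (h : l.take s = l'.take s) (hu : u ≤ s) :
    confAt l u = confAt l' u := by
  rw [confAt, confAt, ← min_eq_left hu, ← List.take_take, h, List.take_take]

theorem knowsAllAt_iff_of_take_eq (h : l.take s = l'.take s) (hu : u ≤ s) (y : Fin n) :
    knowsAllAt l u y ↔ knowsAllAt l' u y := by
  rw [knowsAllAt, knowsAllAt, confAt_eq_of_take_eq h hu]

theorem Nt_eq_of_take_eq (h : l.take s = l'.take s) (hu : u ≤ s) : Nt l u = Nt l' u := by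
  simp only [Nt, knowsAllAt_iff_of_take_eq h hu]

theorem Yt_eq_of_take_eq (h : l.take s = l'.take s) (hy : knowsAllAt l s y) :
    Yt l' y = Yt l y := by
  have hYl : Yt l y ≤ s := Yt_le hy
  have hy' : knowsAllAt l' (Yt l y) y := (knowsAllAt_iff_of_take_eq h hYl y).1 (knowsAllAt_Yt hy)
  refine le_antisymm (Yt_le hy') (Yt_le ?_)
  exact (knowsAllAt_iff_of_take_eq h ((Yt_le hy').trans hYl) y).2 (knowsAllAt_Yt hy')

theorem confAt_zero (l : List (Sym2 (Fin n))) : confAt l 0 = fun v => {v} := by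
  simp [confAt]

/-- A site that never learns everything has `Yt = sInf ∅ = 0`; it still cannot tie with `x`,
because `Yt l x = 0` forces `n = 1`. -/
theorem Yt_eq_iff (hx : knowsAllAt l (Yt l x) x) :
    Yt l y = Yt l x ↔ knowsAllAt l (Yt l x) y ∧ ∀ u < Yt l x, ¬ knowsAllAt l u y := by
  constructor
  · intro hy
    by_cases hknown : ∃ s, knowsAllAt l s y
    · obtain ⟨s, hs⟩ := hknown
      refine ⟨hy ▸ knowsAllAt_Yt hs, fun u hu hu' => ?_⟩
      exact absurd (Yt_le hu') (by omega)
    · push Not at hknown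
      have hempty : {s | knowsAllAt l s y} = ∅ := Set.eq_empty_of_forall_notMem hknown
      have hx0 : Yt l x = 0 := by rw [← hy, Yt, hempty, Nat.sInf_empty]
      rw [hx0] at hx
      have hyx : y ∈ confAt l 0 x := (show confAt l 0 x = Set.univ from hx) ▸ Set.mem_univ y
      simp only [confAt_zero, Set.mem_singleton_iff] at hyx
      exact absurd (hyx ▸ hx) (hknown 0)
  · rintro ⟨hy, hmin⟩
    exact le_antisymm (Yt_le hy) (not_lt.1 fun hlt => hmin _ hlt (knowsAllAt_Yt hy))

theorem rnk_eq_of_take_eq (h : l.take s = l'.take s) (hx : knowsAllAt l s x) (c : Fin n → Bool) :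
    rnk l' c x = rnk l c x := by
  have hY : Yt l' x = Yt l x := Yt_eq_of_take_eq h hx
  have hYs : Yt l x ≤ s := Yt_le hx
  have hxY : knowsAllAt l (Yt l x) x := knowsAllAt_Yt hx
  have hxY' : knowsAllAt l' (Yt l' x) x := hY ▸ (knowsAllAt_iff_of_take_eq h hYs x).1 hxY
  have hties :
      univ.filter (fun y => Yt l' y = Yt l' x) = univ.filter (fun y => Yt l y = Yt l x) := by
    refine filter_congr fun y _ => ?_
    rw [Yt_eq_iff hxY', Yt_eq_iff hxY, hY, knowsAllAt_iff_of_take_eq h hYs]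
    exact and_congr_right fun _ => forall₂_congr fun u hu =>
      not_congr (knowsAllAt_iff_of_take_eq h (hu.le.trans hYs) y).symm
  unfold rnk Lt
  rw [hties, hY, ← Nt_eq_of_take_eq h hYs, ← Nt_eq_of_take_eq h (tsub_le_self.trans hYs)]

theorem confAt_succ (hs : s < l.length) : confAt l (s + 1) = updateInfo (confAt l s) l[s] := by
  rw [confAt, confAt, List.take_add_one, List.getElem?_eq_getElem hs, Option.toList_some,
    List.foldl_append, List.foldl_cons, List.foldl_nil]

theorem Nt_lt_Nt_succ_of_crossing {v w : Fin n} (hs : s < l.length) (hv : knowsAllAt l s v)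
    (hw : ¬ knowsAllAt l s w) (hvw : l[s] = s(v, w)) : Nt l s < Nt l (s + 1) := by
  have hw' : knowsAllAt l (s + 1) w := by
    refine Set.eq_univ_of_univ_subset ?_
    rw [confAt_succ hs, hvw, ← show confAt l s v = Set.univ from hv]
    simp [updateInfo]
  refine card_lt_card ((ssubset_iff_of_subset fun y hy => ?_).2 ⟨w, ?_, ?_⟩)
  · simp only [mem_filter, mem_univ, true_and] at hy ⊢
    exact hy.mono s.le_succ
  · simpa using hw'
  · simpa using hw

end RumorProcess

section CompleteGraph

variable {V : Type*}

def Crosses (F : Finset V) (e : Sym2 V) : Prop :=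
  ∃ v ∈ F, ∃ w ∉ F, e = s(v, w)

variable [Fintype V] [Fintype (⊤ : SimpleGraph V).edgeSet]

theorem card_edgeSet_top :
    Fintype.card (⊤ : SimpleGraph V).edgeSet = (Fintype.card V).choose 2 := by
  rw [← SimpleGraph.edgeFinset_card]
  convert SimpleGraph.card_edgeFinset_top_eq_card_choose_two (V := V)

variable [DecidableEq V]

theorem card_mul_card_compl_le_card_crosses (F : Finset V) :
    #F * #Fᶜ ≤ #{e : (⊤ : SimpleGraph V).edgeSet | Crosses F e} := by
  rw [← card_product, ← card_map (Function.Embedding.subtype _)]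
  refine card_le_card_of_injOn (fun p => s(p.1, p.2)) (fun p hp => ?_) (fun p hp q hq hpq => ?_)
  · simp only [coe_product, coe_compl, Set.mem_prod, mem_coe, Set.mem_compl_iff] at hp
    have hadj : s(p.1, p.2) ∈ (⊤ : SimpleGraph V).edgeSet := by
      simpa using fun h : p.1 = p.2 => hp.2 (h ▸ hp.1)
    simp only [coe_map, Function.Embedding.subtype_apply, Set.mem_image, mem_coe, mem_filter,
      mem_univ, true_and]
    exact ⟨⟨_, hadj⟩, ⟨p.1, hp.1, p.2, hp.2, rfl⟩, rfl⟩
  · simp only [coe_product, coe_compl, Set.mem_prod, mem_coe, Set.mem_compl_iff] at hp hq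
    rcases Sym2.eq_iff.1 hpq with ⟨h1, h2⟩ | ⟨h1, _⟩
    · exact Prod.ext h1 h2
    · exact absurd (h1 ▸ hp.1) hq.2

end CompleteGraph

section Outcomes

variable {n t : ℕ}

abbrev Outcome (n t : ℕ) : Type :=
  (Fin t → (⊤ : SimpleGraph (Fin n)).edgeSet) × (Fin n → Bool)

def edgeList (g : Fin t → (⊤ : SimpleGraph (Fin n)).edgeSet) : List (Sym2 (Fin n)) :=
  List.ofFn fun i => (g i : Sym2 (Fin n))

@[simp]
theorem length_edgeList (g : Fin t → (⊤ : SimpleGraph (Fin n)).edgeSet) :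
    (edgeList g).length = t :=
  List.length_ofFn

theorem getElem_edgeList (g : Fin t → (⊤ : SimpleGraph (Fin n)).edgeSet) (i : Fin t) :
    (edgeList g)[(i : ℕ)]'(by simp) = g i :=
  List.getElem_ofFn _

theorem take_edgeList_update (g : Fin t → (⊤ : SimpleGraph (Fin n)).edgeSet) (i : Fin t)
    (e : (⊤ : SimpleGraph (Fin n)).edgeSet) :
    (edgeList (update g i e)).take i = (edgeList g).take i := by
  refine List.ext_getElem (by simp) fun j hj _ => ?_
  simp only [List.length_take, length_edgeList, lt_min_iff] at hj
  simp only [List.getElem_take, edgeList, List.getElem_ofFn]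
  rw [update_of_ne (Fin.ne_of_lt hj.1)]

def rankEvent (k : ℕ) (x : Fin n) (ω : Outcome n t) : Prop :=
  knowsAllAt (edgeList ω.1) t x ∧ rnk (edgeList ω.1) ω.2 x = k

def levelEvent (k : ℕ) (x : Fin n) (j s : ℕ) (ω : Outcome n t) : Prop :=
  rankEvent k x ω ∧ Yt (edgeList ω.1) x ≤ s ∧ Nt (edgeList ω.1) s = j

variable {k j s : ℕ} {x : Fin n} {ω : Outcome n t}

theorem levelEvent_of_le_of_le {u v : ℕ} (hs : levelEvent k x j s ω) (hv : levelEvent k x j v ω)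
    (hsu : s ≤ u) (huv : u ≤ v) : levelEvent k x j u ω :=
  ⟨hs.1, hs.2.1.trans hsu,
    le_antisymm (hv.2.2 ▸ Nt_mono _ huv) (hs.2.2 ▸ Nt_mono _ hsu)⟩

theorem levelEvent_update {i : Fin t} (h : levelEvent k x j i ω)
    (e : (⊤ : SimpleGraph (Fin n)).edgeSet) : levelEvent k x j i (update ω.1 i e, ω.2) := by
  have htake := take_edgeList_update ω.1 i e
  have hxi : knowsAllAt (edgeList ω.1) i x := (knowsAllAt_Yt h.1.1).mono h.2.1
  refine ⟨⟨?_, ?_⟩, ?_, ?_⟩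
  · exact ((knowsAllAt_iff_of_take_eq htake.symm le_rfl x).1 hxi).mono i.is_lt.le
  · exact (rnk_eq_of_take_eq htake.symm hxi ω.2).trans h.1.2
  · exact (Yt_eq_of_take_eq htake.symm hxi).trans_le h.2.1
  · exact (Nt_eq_of_take_eq htake le_rfl).trans h.2.2

noncomputable def remainingTime (l : List (Sym2 (Fin n))) (t : ℕ) (x : Fin n) : ℕ :=
  (if ∀ v : Fin n, knowsAllAt l t v then tauAll l else t) - Yt l x

theorem remainingTime_le_sum_card {ω : Outcome n t} (hω : rankEvent k x ω) :
    remainingTime (edgeList ω.1) t x ≤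
      ∑ j ∈ Ico k n, #{s ∈ range t | levelEvent k x j s ω} := by
  set l := edgeList ω.1
  set τ := if ∀ v : Fin n, knowsAllAt l t v then tauAll l else t with hτ
  have hτt : τ ≤ t := by
    rw [hτ]
    split_ifs with hall
    · exact Nat.sInf_le hall
    · exact le_rfl
  have hkY : k ≤ Nt l (Yt l x) := hω.2 ▸ Nat.sub_le _ _
  have hlevel : ∀ s ∈ Ico (Yt l x) τ, Nt l s ∈ Ico k n ∧ s ∈ range t := by
    intro s hs
    obtain ⟨hYs, hsτ⟩ := mem_Ico.1 hs
    refine ⟨mem_Ico.2 ⟨hkY.trans (Nt_mono l hYs),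
      Nt_lt_of_not_forall_knowsAllAt fun hall => ?_⟩, mem_range.2 (hsτ.trans_le hτt)⟩
    rw [hτ] at hsτ
    split_ifs at hsτ with hallt
    · exact Nat.notMem_of_lt_sInf hsτ hall
    · exact hallt fun v => (hall v).mono hsτ.le
  calc remainingTime l t x = #(Ico (Yt l x) τ) := (Nat.card_Ico _ _).symm
    _ ≤ #((Ico k n).biUnion fun j => {s ∈ range t | levelEvent k x j s ω}) := by
        refine card_le_card fun s hs => mem_biUnion.2 ⟨Nt l s, (hlevel s hs).1, ?_⟩
        exact mem_filter.2 ⟨(hlevel s hs).2, hω, (mem_Ico.1 hs).1, rfl⟩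
    _ ≤ ∑ j ∈ Ico k n, #{s ∈ range t | levelEvent k x j s ω} := card_biUnion_le

variable [Fintype (⊤ : SimpleGraph (Fin n)).edgeSet]

theorem mul_le_card_not_levelEvent_update {i : Fin t} (h : levelEvent k x j i ω) :
    j * (n - j) ≤
      #{e : (⊤ : SimpleGraph (Fin n)).edgeSet |
        ¬ levelEvent k x j (i + 1) (update ω.1 i e, ω.2)} := by
  let F : Finset (Fin n) := {v | knowsAllAt (edgeList ω.1) i v}
  have hF : #F = j := h.2.2
  calc j * (n - j) = #F * #Fᶜ := by rw [card_compl, Fintype.card_fin, hF]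
    _ ≤ _ := (card_mul_card_compl_le_card_crosses F).trans ?_
  refine card_le_card fun e he => mem_filter.2 ⟨mem_univ e, fun hexit => ?_⟩
  obtain ⟨v, hv, w, hw, hvw⟩ := (mem_filter.1 he).2
  have htake := take_edgeList_update ω.1 i e
  simp only [F, mem_filter, mem_univ, true_and] at hv hw
  have hcross := Nt_lt_Nt_succ_of_crossing (l := edgeList (update ω.1 i e)) (s := i)
    (by simp) ((knowsAllAt_iff_of_take_eq htake.symm le_rfl v).1 hv)
    (mt (knowsAllAt_iff_of_take_eq htake.symm le_rfl w).2 hw)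
    (by rw [getElem_edgeList, update_self, hvw])
  have hstay : Nt (edgeList (update ω.1 i e)) i = j := (levelEvent_update h e).2.2
  have hleave : Nt (edgeList (update ω.1 i e)) (i + 1) = j := hexit.2.2
  omega

theorem mul_sum_card_levelEvent_le (k : ℕ) (x : Fin n) (j : ℕ) :
    j * (n - j) * ∑ s ∈ range t, #{ω : Outcome n t | levelEvent k x j s ω} ≤
      Fintype.card (⊤ : SimpleGraph (Fin n)).edgeSet *
        #{ω : Outcome n t | rankEvent k x ω} := by
  refine (mul_sum_card_filter_le_of_exit (levelEvent k x j)
    (fun _ _ _ _ hsu huv hs hv => levelEvent_of_le_of_le hs hv hsu huv)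
    (fun _ _ h => levelEvent_update h) (fun _ _ h => mul_le_card_not_levelEvent_update h)).trans ?_
  gcongr
  rintro ⟨s, hs⟩
  exact hs.1

theorem sum_remainingTime_le (k : ℕ) (x : Fin n) :
    ∑ ω : Outcome n t, (if rankEvent k x ω then remainingTime (edgeList ω.1) t x else 0) ≤
      ∑ j ∈ Ico k n, ∑ s ∈ range t, #{ω : Outcome n t | levelEvent k x j s ω} := by
  calc ∑ ω : Outcome n t, (if rankEvent k x ω then remainingTime (edgeList ω.1) t x else 0)
      ≤ ∑ ω : Outcome n t, ∑ j ∈ Ico k n, #{s ∈ range t | levelEvent k x j s ω} := by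
        refine sum_le_sum fun ω _ => ?_
        split_ifs with hω
        · exact remainingTime_le_sum_card hω
        · exact Nat.zero_le _
    _ = ∑ j ∈ Ico k n, ∑ s ∈ range t, #{ω : Outcome n t | levelEvent k x j s ω} := by
        rw [sum_comm]
        refine sum_congr rfl fun j _ => ?_
        simp only [card_filter]
        exact sum_comm

theorem sum_card_levelEvent_le_div_mul {k j : ℕ} (x : Fin n) (hj : 1 ≤ j) (hjn : j < n) :
    ((∑ s ∈ range t, #{ω : Outcome n t | levelEvent k x j s ω} : ℕ) : ℝ≥0∞) ≤
      (n.choose 2 : ℝ≥0∞) / ((j * (n - j) : ℕ) : ℝ≥0∞) *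
        #{ω : Outcome n t | rankEvent k x ω} := by
  have hpos : ((j * (n - j) : ℕ) : ℝ≥0∞) ≠ 0 := by
    exact_mod_cast (Nat.mul_pos (by omega) (by omega)).ne'
  have hcount := mul_sum_card_levelEvent_le (t := t) k x j
  rw [card_edgeSet_top, Fintype.card_fin, mul_comm] at hcount
  rw [div_eq_mul_inv, mul_right_comm, ← div_eq_mul_inv,
    ENNReal.le_div_iff_mul_le (Or.inl hpos) (Or.inl (ENNReal.natCast_ne_top _))]
  exact_mod_cast hcount

theorem rankProb_eq_card_div (k : ℕ) (x : Fin n) (t : ℕ) :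
    rankProb n k x t =
      #{ω : Outcome n t | rankEvent k x ω} / (Fintype.card (Outcome n t) : ℝ≥0∞) := by
  unfold rankProb unifProb
  congr!

theorem rankRemExp_eq_sum_div (k : ℕ) (x : Fin n) (t : ℕ) :
    rankRemExp n k x t =
      ((∑ ω : Outcome n t,
          if rankEvent k x ω then remainingTime (edgeList ω.1) t x else 0 : ℕ) : ℝ≥0∞) /
        Fintype.card (Outcome n t) := by
  unfold rankRemExp unifExp
  rw [Nat.cast_sum]
  congr! with ω
  rw [Nat.cast_ite, Nat.cast_zero]
  exact if_congr Iff.rfl rfl rfl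

end Outcomes

/-- Expected time for a single rumor on `K_n` to go from `k` informed sites to all `n`: with `j`
informed sites, a step informs a new one with probability `j (n - j) / C(n, 2)`. -/
noncomputable def spreadTime (n k : ℕ) : ℝ≥0∞ :=
  ∑ j ∈ Ico k n, (n.choose 2 : ℝ≥0∞) / ((j * (n - j) : ℕ) : ℝ≥0∞)

theorem rankRemExp_le_spreadTime_mul_rankProb {n k : ℕ} (x : Fin n) (hk : 1 ≤ k) (t : ℕ) :
    rankRemExp n k x t ≤ spreadTime n k * rankProb n k x t := by
  rw [rankRemExp_eq_sum_div, rankProb_eq_card_div, spreadTime, ← mul_div_assoc, sum_mul]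
  refine ENNReal.div_le_div_right ?_ _
  calc ((∑ ω : Outcome n t,
          if rankEvent k x ω then remainingTime (edgeList ω.1) t x else 0 : ℕ) : ℝ≥0∞)
      ≤ ((∑ j ∈ Ico k n, ∑ s ∈ range t, #{ω : Outcome n t | levelEvent k x j s ω} : ℕ)
          : ℝ≥0∞) :=
        Nat.cast_le.2 (sum_remainingTime_le k x)
    _ ≤ _ := by
        rw [Nat.cast_sum]
        exact sum_le_sum fun j hj =>
          sum_card_levelEvent_le_div_mul x (hk.trans (mem_Ico.1 hj).1) (mem_Ico.1 hj).2

theorem H_sub_one_eq_sum_range (m : ℕ) : H (m - 1) = ∑ j ∈ range m, 1 / (j : ℝ) := by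
  cases m with
  | zero => simp [H]
  | succ m => simp [H, sum_range_succ']

theorem sum_Ico_one_div_eq_H_sub {k n : ℕ} (hkn : k ≤ n) :
    ∑ j ∈ Ico k n, 1 / (j : ℝ) = H (n - 1) - H (k - 1) := by
  rw [sum_Ico_eq_sub _ hkn, H_sub_one_eq_sum_range, H_sub_one_eq_sum_range]

theorem sum_Ico_one_div_sub_eq_H (k n : ℕ) :
    ∑ j ∈ Ico k n, 1 / ((n - j : ℕ) : ℝ) = H (n - k) := by
  rw [sum_Ico_reflect (fun j => 1 / (j : ℝ)) k (Nat.le_succ n), sum_Ico_eq_sum_range, H,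
    show n + 1 - k - (n + 1 - n) = n - k by omega]
  refine sum_congr rfl fun j _ => ?_
  rw [Nat.add_sub_cancel_left]
  push_cast
  ring

theorem spreadTime_eq_ofReal {k n : ℕ} (hk : 1 ≤ k) (hkn : k ≤ n) :
    spreadTime n k =
      ENNReal.ofReal (((n : ℝ) - 1) / 2 * (H (n - 1) - H (k - 1) + H (n - k))) := by
  have hterm : ∀ j ∈ Ico k n, (n.choose 2 : ℝ≥0∞) / ((j * (n - j) : ℕ) : ℝ≥0∞) =
      ENNReal.ofReal (((n : ℝ) - 1) / 2 * (1 / (j : ℝ) + 1 / ((n - j : ℕ) : ℝ))) := by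
    intro j hj
    obtain ⟨hkj, hjn⟩ := mem_Ico.1 hj
    have hj0 : (0 : ℝ) < j := by exact_mod_cast (by omega : 0 < j)
    have hnj0 : (0 : ℝ) < ((n - j : ℕ) : ℝ) := by exact_mod_cast (by omega : 0 < n - j)
    have hpartial : ((n : ℝ) - 1) / 2 * (1 / (j : ℝ) + 1 / ((n - j : ℕ) : ℝ)) =
        (n.choose 2 : ℝ) / ((j * (n - j) : ℕ) : ℝ) := by
      rw [Nat.cast_choose_two, Nat.cast_mul]
      rw [Nat.cast_sub hjn.le] at hnj0 ⊢
      field_simp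
      ring
    rw [hpartial, ENNReal.ofReal_div_of_pos (by rw [Nat.cast_mul]; positivity),
      ENNReal.ofReal_natCast, ENNReal.ofReal_natCast]
  have hn : (1 : ℝ) ≤ n := by exact_mod_cast hk.trans hkn
  rw [spreadTime, sum_congr rfl hterm, ← ENNReal.ofReal_sum_of_nonneg fun j _ => by
      exact mul_nonneg (by linarith) (by positivity),
    ← mul_sum, sum_add_distrib, sum_Ico_one_div_eq_H_sub hkn, sum_Ico_one_div_sub_eq_H]

/-- The conditional expectation `E[S_x ∣ σ(x) = k]`, obtained by monotone convergence as the
ratio of the suprema over horizons of `E[S_x·1{σ(x)=k}]` and `P[σ(x)=k]`. -/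
theorem conditional_remaining_time_bound (n k : ℕ) (x : Fin n) (hk : 1 ≤ k) (hkn : k ≤ n) :
    (⨆ t : ℕ, rankRemExp n k x t) / (⨆ t : ℕ, rankProb n k x t)
      ≤ ENNReal.ofReal (((n : ℝ) - 1) / 2 * (H (n - 1) - H (k - 1) + H (n - k))) := by
  refine ENNReal.div_le_of_le_mul (iSup_le fun t => ?_)
  calc rankRemExp n k x t
      ≤ spreadTime n k * rankProb n k x t := rankRemExp_le_spreadTime_mul_rankProb x hk t
    _ ≤ ENNReal.ofReal (((n : ℝ) - 1) / 2 * (H (n - 1) - H (k - 1) + H (n - k))) *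
          ⨆ t : ℕ, rankProb n k x t := by
        rw [spreadTime_eq_ofReal hk hkn]
        gcongr
        exact le_iSup (rankProb n k x) t
end

section
/- Summing the inequality n(n-1)/k ≤ (2n-1)[M_n(k) − M_n(k-1)] − b_k + b_{k-1} (where b_k = k[M_n(k) − M_n(k-1)]) for k from 3 to n-1 yields n(n-1)(H(n-1) − 3/2) ≤ 2n[M_n(n) − M_n(1)]. -/
open scoped ENNReal Classical

open Finset

theorem Finset.sum_Ioc_sub_pred {G : Type*} [AddCommGroup G] (f : ℕ → G) {q p : ℕ}
    (hqp : q ≤ p) : ∑ k ∈ Ioc q p, (f k - f (k - 1)) = f p - f q := by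
  induction p, hqp using Nat.le_induction with
  | base => simp
  | succ p hqp ih =>
    rw [sum_Ioc_succ_top hqp, ih, Nat.add_sub_cancel]
    abel

theorem H_succ (p : ℕ) : H (p + 1) = H p + 1 / (p + 1) := by
  simp [H, sum_range_succ]

theorem H_two : H 2 = 3 / 2 := by
  norm_num [H, sum_range_succ]

theorem H_sub_H_eq_sum_Ioc {q p : ℕ} (hqp : q ≤ p) :
    H p - H q = ∑ k ∈ Ioc q p, (1 : ℝ) / k := by
  induction p, hqp using Nat.le_induction with
  | base => simp
  | succ p hqp ih =>
    rw [sum_Ioc_succ_top hqp, ← ih, H_succ]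
    push_cast
    ring

/-- With `b k = k (M k - M (k - 1))`, the `k`-th summand is `c (M k - M (k - 1)) - b k + b (k - 1)`,
so both parts telescope. -/
theorem sum_Ioc_two_recursion_rhs (c : ℝ) (M : ℕ → ℝ) {p : ℕ} (hp : 2 ≤ p) :
    ∑ k ∈ Ioc 2 p, (c * (M k - M (k - 1)) - k * (M k - M (k - 1))
        + (k - 1) * (M (k - 1) - M (k - 2)))
      = c * (M p - M 2) - p * (M p - M (p - 1)) + 2 * (M 2 - M 1) := by
  set f : ℕ → ℝ := fun j => c * M j - j * (M j - M (j - 1))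
  have hsummand : ∀ k ∈ Ioc 2 p, c * (M k - M (k - 1)) - k * (M k - M (k - 1))
      + (k - 1) * (M (k - 1) - M (k - 2)) = f k - f (k - 1) := by
    intro k hk
    have hk1 : 1 ≤ k := by linarith [(mem_Ioc.mp hk).1]
    simp only [f, Nat.cast_sub hk1, Nat.sub_sub]
    push_cast
    ring
  rw [sum_congr rfl hsummand, sum_Ioc_sub_pred f hp]
  norm_num [f]
  ring

theorem summing_recursion_inequality (n : ℕ) (hn : 4 ≤ n) (M : ℕ → ℝ)
    (hmono : ∀ k l : ℕ, k ≤ l → M k ≤ M l)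
    (hineq : ∀ k : ℕ, 3 ≤ k → k ≤ n - 1 →
      (n * (n - 1) : ℝ) / k ≤
        (2 * n - 1) * (M k - M (k - 1)) - k * (M k - M (k - 1))
          + (k - 1) * (M (k - 1) - M (k - 2))) :
    (n * (n - 1) : ℝ) * (H (n - 1) - 3 / 2) ≤ 2 * n * (M n - M 1) := by
  have hm : 2 ≤ n - 1 := by omega
  have hsum : (n * (n - 1) : ℝ) * (H (n - 1) - 3 / 2)
      ≤ (2 * n - 1) * (M (n - 1) - M 2) - (n - 1 : ℕ) * (M (n - 1) - M (n - 1 - 1))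
        + 2 * (M 2 - M 1) := by
    rw [← H_two, H_sub_H_eq_sum_Ioc hm, mul_sum, ← sum_Ioc_two_recursion_rhs _ M hm]
    refine sum_le_sum fun k hk => ?_
    obtain ⟨hk3, hkn⟩ := mem_Ioc.mp hk
    rw [mul_one_div]
    exact hineq k hk3 hkn
  have h12 := hmono 1 2 (by omega)
  have h2m := hmono 2 (n - 1) hm
  have hmn := hmono (n - 1) n (by omega)
  have hlast := hmono (n - 1 - 1) (n - 1) (by omega)
  have hn1 : (1 : ℝ) ≤ n := by exact_mod_cast (show 1 ≤ n by omega)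
  -- drop `b (n - 1) ≥ 0`, then use `2n - 1 ≤ 2n` and monotonicity of `M`
  nlinarith [mul_nonneg (Nat.cast_nonneg (n - 1) : (0 : ℝ) ≤ (n - 1 : ℕ)) (sub_nonneg.mpr hlast),
    mul_nonneg (by linarith : (0 : ℝ) ≤ n) (sub_nonneg.mpr hmn)]
end
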